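/- arXiv:2210.07134 — 2 statements merged into one kernel-verified Lean document; each statement's English description precedes it below -/
import Mathlib

section
/- Let u, e : ℝ → ℝ be smooth and let H, E : ℝ × ℝ → ℝ be jointly smooth functions of (x,t) satisfying ∂_t H(x,t) = −u(x) ∂_x E(x,t) and ∂_t E(x,t) = −e(x) ∂_x H(x,t) everywhere. Fix (x₀,t₀) and Δx, Δt > 0, and define c^H_{ℓ,s} := (Δx^{ℓ} Δt^{s} / (ℓ! s!)) · ∂_t^{s} ∂_x^{ℓ} H(x₀,t₀) and c^E_{ℓ,s} := (Δx^{ℓ} Δt^{s} / (ℓ! s!)) · ∂_t^{s} ∂_x^{ℓ} E(x₀,t₀). Then for all integers ℓ ≥ 0 and s ≥ 1: c^H_{ℓ,s} = −∑_{i=0}^{ℓ} ((i+1) Δt Δx^{ℓ−i−1} / ((ℓ−i)! s)) · (d^{ℓ−i}u/dx^{ℓ−i})(x₀) · c^E_{i+1,s−1}, and c^E_{ℓ,s} = −∑_{i=0}^{ℓ} ((i+1) Δt Δx^{ℓ−i−1} / ((ℓ−i)! s)) · (d^{ℓ−i}e/dx^{ℓ−i})(x₀) · c^H_{i+1,s−1}.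 -/
/-- Partial derivative in the first (space) variable. -/
noncomputable def Dx (f : ℝ × ℝ → ℝ) : ℝ × ℝ → ℝ :=
  fun p => deriv (fun x => f (x, p.2)) p.1

/-- Partial derivative in the second (time) variable. -/
noncomputable def Dt (f : ℝ × ℝ → ℝ) : ℝ × ℝ → ℝ :=
  fun p => deriv (fun t => f (p.1, t)) p.2

section helpers

variable {F : Type*} [NormedAddCommGroup F] [NormedSpace ℝ F]

lemma hasDerivAt_sliceX (f : ℝ × ℝ → F) (hf : DifferentiableAt ℝ f p) :
    HasDerivAt (fun x => f (x, p.2)) (fderiv ℝ f p ((1:ℝ), (0:ℝ))) p.1 := by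
  have h1 : HasDerivAt (fun x : ℝ => (x, p.2)) ((1:ℝ), (0:ℝ)) p.1 :=
    (hasDerivAt_id p.1).prodMk (hasDerivAt_const _ _)
  have := hf.hasFDerivAt.comp_hasDerivAt p.1 (by simpa using h1)
  simpa [Function.comp_def] using this

lemma hasDerivAt_sliceT (f : ℝ × ℝ → F) (hf : DifferentiableAt ℝ f p) :
    HasDerivAt (fun t => f (p.1, t)) (fderiv ℝ f p ((0:ℝ), (1:ℝ))) p.2 := by
  have h1 : HasDerivAt (fun t : ℝ => (p.1, t)) ((0:ℝ), (1:ℝ)) p.2 :=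
    (hasDerivAt_const _ _).prodMk (hasDerivAt_id p.2)
  have := hf.hasFDerivAt.comp_hasDerivAt p.2 (by simpa using h1)
  simpa [Function.comp_def] using this

end helpers

lemma Dx_eq (f : ℝ × ℝ → ℝ) (hf : Differentiable ℝ f) :
    Dx f = fun p => fderiv ℝ f p ((1:ℝ), (0:ℝ)) := by
  funext p
  exact (hasDerivAt_sliceX f (hf p)).deriv

lemma Dt_eq (f : ℝ × ℝ → ℝ) (hf : Differentiable ℝ f) :
    Dt f = fun p => fderiv ℝ f p ((0:ℝ), (1:ℝ)) := by
  funext p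
  exact (hasDerivAt_sliceT f (hf p)).deriv

lemma contDiff_Dx (f : ℝ × ℝ → ℝ) (hf : ContDiff ℝ (⊤ : ℕ∞) f) : ContDiff ℝ (⊤ : ℕ∞) (Dx f) := by
  rw [Dx_eq f (hf.differentiable (by norm_num))]
  exact (hf.fderiv_right (by norm_num)).clm_apply contDiff_const

lemma contDiff_Dt (f : ℝ × ℝ → ℝ) (hf : ContDiff ℝ (⊤ : ℕ∞) f) : ContDiff ℝ (⊤ : ℕ∞) (Dt f) := by
  rw [Dt_eq f (hf.differentiable (by norm_num))]
  exact (hf.fderiv_right (by norm_num)).clm_apply contDiff_const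

lemma Dx_Dt_comm (f : ℝ × ℝ → ℝ) (hf : ContDiff ℝ (⊤ : ℕ∞) f) : Dx (Dt f) = Dt (Dx f) := by
  have hd : Differentiable ℝ f := hf.differentiable (by norm_num)
  have hF : ContDiff ℝ (⊤ : ℕ∞) (fderiv ℝ f) := hf.fderiv_right (by norm_num)
  have hFd : Differentiable ℝ (fderiv ℝ f) := hF.differentiable (by norm_num)
  funext p
  have key : ∀ v w : ℝ × ℝ, fderiv ℝ (fderiv ℝ f) p v w = fderiv ℝ (fderiv ℝ f) p w v := by
    intro v w
    exact second_derivative_symmetric (fun y => (hd y).hasFDerivAt) (hFd p).hasFDerivAt v w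
  have e1 : Dx (Dt f) p = fderiv ℝ (fderiv ℝ f) p (1,0) (0,1) := by
    rw [Dt_eq f hd]
    have h := ((hasDerivAt_sliceX (fderiv ℝ f) (hFd p)).clm_apply
      (hasDerivAt_const p.1 ((0:ℝ),(1:ℝ))))
    simp only [Dx]
    rw [h.deriv]; simp
  have e2 : Dt (Dx f) p = fderiv ℝ (fderiv ℝ f) p (0,1) (1,0) := by
    rw [Dx_eq f hd]
    have h := ((hasDerivAt_sliceT (fderiv ℝ f) (hFd p)).clm_apply
      (hasDerivAt_const p.2 ((1:ℝ),(0:ℝ))))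
    simp only [Dt]
    rw [h.deriv]; simp
  rw [e1, e2, key]

lemma contDiff_DxIter (f : ℝ × ℝ → ℝ) (hf : ContDiff ℝ (⊤ : ℕ∞) f) (n : ℕ) :
    ContDiff ℝ (⊤ : ℕ∞) (Dx^[n] f) := by
  induction n with
  | zero => exact hf
  | succ k ih => rw [Function.iterate_succ_apply']; exact contDiff_Dx _ ih

lemma contDiff_DtIter (f : ℝ × ℝ → ℝ) (hf : ContDiff ℝ (⊤ : ℕ∞) f) (n : ℕ) :
    ContDiff ℝ (⊤ : ℕ∞) (Dt^[n] f) := by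
  induction n with
  | zero => exact hf
  | succ k ih => rw [Function.iterate_succ_apply']; exact contDiff_Dt _ ih

lemma DxIter_Dt_comm (f : ℝ × ℝ → ℝ) (hf : ContDiff ℝ (⊤ : ℕ∞) f) (n : ℕ) :
    Dx^[n] (Dt f) = Dt (Dx^[n] f) := by
  induction n with
  | zero => rfl
  | succ k ih =>
      rw [Function.iterate_succ_apply', ih, Dx_Dt_comm _ (contDiff_DxIter f hf k),
        ← Function.iterate_succ_apply' Dx k f]

lemma DxIter_DtIter_comm (f : ℝ × ℝ → ℝ) (hf : ContDiff ℝ (⊤ : ℕ∞) f) (a b : ℕ) :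
    Dx^[a] (Dt^[b] f) = Dt^[b] (Dx^[a] f) := by
  induction b generalizing f with
  | zero => rfl
  | succ k ih =>
      rw [Function.iterate_succ_apply, Function.iterate_succ_apply,
        ih (Dt f) (contDiff_Dt f hf), DxIter_Dt_comm f hf a]

lemma Dt_const_mul (c : ℝ → ℝ) (g : ℝ × ℝ → ℝ) :
    Dt (fun p => c p.1 * g p) = fun p => c p.1 * Dt g p := by
  funext p
  simp only [Dt]
  exact deriv_const_mul_field _

lemma DtIter_const_mul (c : ℝ → ℝ) (g : ℝ × ℝ → ℝ) (s : ℕ) :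
    Dt^[s] (fun p => c p.1 * g p) = fun p => c p.1 * Dt^[s] g p := by
  induction s generalizing g with
  | zero => rfl
  | succ k ih => rw [Function.iterate_succ_apply, Dt_const_mul, ih, Function.iterate_succ_apply]

lemma hasDerivAt_Dx (g : ℝ × ℝ → ℝ) (hg : ContDiff ℝ (⊤ : ℕ∞) g) (p : ℝ × ℝ) :
    HasDerivAt (fun x => g (x, p.2)) (Dx g p) p.1 := by
  have hd : Differentiable ℝ g := hg.differentiable (by norm_num)
  rw [Dx_eq g hd]
  exact hasDerivAt_sliceX g (hd p)

lemma pascal_sum (B : ℕ → ℝ) (ℓ : ℕ) :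
    ∑ j ∈ Finset.range (ℓ+1), (ℓ.choose j : ℝ) * B (j+1)
      + ∑ j ∈ Finset.range (ℓ+1), (ℓ.choose j : ℝ) * B j
    = ∑ j ∈ Finset.range (ℓ+2), ((ℓ+1).choose j : ℝ) * B j := by
  rw [Finset.sum_range_succ' (fun j => ((ℓ+1).choose j : ℝ) * B j) (ℓ+1)]
  rw [Finset.sum_range_succ' (fun j => (ℓ.choose j : ℝ) * B j) ℓ]
  have h1 : ∀ i, (((ℓ+1).choose (i+1) : ℕ) : ℝ) = (ℓ.choose i : ℝ) + (ℓ.choose (i+1) : ℝ) := by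
    intro i; rw [Nat.choose_succ_succ']; push_cast; ring
  simp only [h1, add_mul]
  rw [Finset.sum_add_distrib]
  rw [Finset.sum_range_succ (fun i => (ℓ.choose (i+1) : ℝ) * B (i+1)) ℓ]
  simp [Nat.choose_succ_self]
  ring

lemma Dx_leibniz (u : ℝ → ℝ) (hu : ContDiff ℝ (⊤ : ℕ∞) u) (f : ℝ × ℝ → ℝ) (hf : ContDiff ℝ (⊤ : ℕ∞) f) :
    ∀ ℓ : ℕ, Dx^[ℓ] (fun p => u p.1 * f p) = fun p =>
      ∑ j ∈ Finset.range (ℓ+1), (ℓ.choose j : ℝ) * iteratedDeriv j u p.1 * Dx^[ℓ-j] f p := by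
  intro ℓ
  induction ℓ with
  | zero => funext p; simp
  | succ ℓ ih =>
    rw [Function.iterate_succ_apply', ih]
    funext p
    have hterm : ∀ j ∈ Finset.range (ℓ+1),
        HasDerivAt (fun x => (ℓ.choose j : ℝ) * iteratedDeriv j u x * Dx^[ℓ-j] f (x, p.2))
          ((ℓ.choose j : ℝ) * iteratedDeriv (j+1) u p.1 * Dx^[ℓ-j] f p
            + (ℓ.choose j : ℝ) * iteratedDeriv j u p.1 * Dx (Dx^[ℓ-j] f) p) p.1 := by
      intro j hj
      have hu' : HasDerivAt (iteratedDeriv j u) (iteratedDeriv (j+1) u p.1) p.1 := by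
        rw [iteratedDeriv_succ]
        exact ((hu.differentiable_iteratedDeriv j (by exact_mod_cast ENat.coe_lt_top j)) p.1).hasDerivAt
      have hf' := hasDerivAt_Dx (Dx^[ℓ-j] f) (contDiff_DxIter f hf (ℓ-j)) p
      have h2 := (hu'.const_mul ((ℓ.choose j : ℝ))).fun_mul hf'
      simpa [mul_assoc] using h2
    have hder : Dx (fun q => ∑ j ∈ Finset.range (ℓ+1),
          (ℓ.choose j : ℝ) * iteratedDeriv j u q.1 * Dx^[ℓ-j] f q) p
        = ∑ j ∈ Finset.range (ℓ+1),
          ((ℓ.choose j : ℝ) * iteratedDeriv (j+1) u p.1 * Dx^[ℓ-j] f p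
            + (ℓ.choose j : ℝ) * iteratedDeriv j u p.1 * Dx (Dx^[ℓ-j] f) p) := by
      have := (HasDerivAt.fun_sum hterm).deriv
      simp only [Dx]
      exact this
    have hre : ∑ j ∈ Finset.range (ℓ+1+1),
          ((ℓ+1).choose j : ℝ) * iteratedDeriv j u p.1 * Dx^[ℓ+1-j] f p
        = ∑ j ∈ Finset.range (ℓ+2),
          ((ℓ+1).choose j : ℝ) * (iteratedDeriv j u p.1 * Dx^[ℓ+1-j] f p) := by
      apply Finset.sum_congr rfl
      intro j hj
      rw [mul_assoc]
    rw [hder, Finset.sum_add_distrib, hre,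
      ← pascal_sum (fun j => iteratedDeriv j u p.1 * Dx^[ℓ+1-j] f p) ℓ]
    congr 1
    · apply Finset.sum_congr rfl
      intro j hj
      have h : ℓ + 1 - (j + 1) = ℓ - j := by omega
      rw [h, mul_assoc]
    · apply Finset.sum_congr rfl
      intro j hj
      have hj' : j ≤ ℓ := Nat.lt_succ_iff.mp (Finset.mem_range.mp hj)
      rw [← Function.iterate_succ_apply' Dx (ℓ-j) f]
      have h : ℓ + 1 - j = (ℓ - j) + 1 := by omega
      rw [h, mul_assoc]

/-- The scaled Taylor coefficient `c^f_{ℓ,s} = (Δx^ℓ Δt^s / (ℓ! s!)) ∂ₜ^s ∂ₓ^ℓ f(x₀,t₀)`. -/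
noncomputable def scaledCoeff (f : ℝ × ℝ → ℝ) (x₀ t₀ Δx Δt : ℝ) (ℓ s : ℕ) : ℝ :=
  (Δx ^ ℓ * Δt ^ s / (Nat.factorial ℓ * Nat.factorial s)) * Dt^[s] (Dx^[ℓ] f) (x₀, t₀)

lemma key (u : ℝ → ℝ) (hu : ContDiff ℝ (⊤ : ℕ∞) u) (H E : ℝ × ℝ → ℝ)
    (hH : ContDiff ℝ (⊤ : ℕ∞) H) (hE : ContDiff ℝ (⊤ : ℕ∞) E)
    (heq : ∀ p : ℝ × ℝ, Dt H p = -(u p.1) * Dx E p)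
    (x₀ t₀ Δx Δt : ℝ) (hΔx : 0 < Δx) (ℓ s : ℕ) :
    scaledCoeff H x₀ t₀ Δx Δt ℓ (s + 1) =
      -(∑ i ∈ Finset.range (ℓ + 1),
          ((i + 1 : ℝ) * Δt * Δx ^ ((ℓ : ℤ) - (i : ℤ) - 1) /
              ((Nat.factorial (ℓ - i) : ℝ) * (s + 1 : ℝ))) *
            iteratedDeriv (ℓ - i) u x₀ * scaledCoeff E x₀ t₀ Δx Δt (i + 1) s) := by
  have hDxE : ContDiff ℝ (⊤ : ℕ∞) (Dx E) := contDiff_Dx E hE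
  have hg : ContDiff ℝ (⊤ : ℕ∞) (Dt^[s] (Dx E)) := contDiff_DtIter _ hDxE s
  -- Step 1: Dt^[s+1] H = fun p => (-u p.1) * Dt^[s] (Dx E) p
  have h1 : Dt^[s+1] H = fun p => (fun x => -u x) p.1 * Dt^[s] (Dx E) p := by
    rw [Function.iterate_succ_apply]
    have hDtH : Dt H = fun p => (fun x => -u x) p.1 * Dx E p := by
      funext p; exact heq p
    rw [hDtH]
    exact DtIter_const_mul (fun x => -u x) (Dx E) s
  -- Step 2: pointwise formula
  have h2 : Dt^[s+1] (Dx^[ℓ] H) (x₀, t₀) =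
      ∑ j ∈ Finset.range (ℓ+1), (ℓ.choose j : ℝ) * iteratedDeriv j (fun x => -u x) x₀ *
        Dt^[s] (Dx^[(ℓ-j)+1] E) (x₀, t₀) := by
    rw [← DxIter_DtIter_comm H hH ℓ (s+1), h1,
      Dx_leibniz (fun x => -u x) hu.neg (Dt^[s] (Dx E)) hg ℓ]
    apply Finset.sum_congr rfl
    intro j hj
    rw [DxIter_DtIter_comm (Dx E) hDxE (ℓ-j) s, ← Function.iterate_succ_apply Dx (ℓ-j) E]
  have hneg : ∀ j : ℕ, iteratedDeriv j (fun x => -u x) x₀ = -(iteratedDeriv j u x₀) := by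
    intro j
    have := iteratedDeriv_neg j u x₀
    simpa using this
  -- unfold and reindex
  rw [scaledCoeff, h2, ← Finset.sum_range_reflect (fun i =>
      ((i + 1 : ℝ) * Δt * Δx ^ ((ℓ : ℤ) - (i : ℤ) - 1) /
          ((Nat.factorial (ℓ - i) : ℝ) * (s + 1 : ℝ))) *
        iteratedDeriv (ℓ - i) u x₀ * scaledCoeff E x₀ t₀ Δx Δt (i + 1) s) (ℓ+1)]
  simp only [Nat.add_sub_cancel]
  rw [Finset.mul_sum, ← Finset.sum_neg_distrib]
  apply Finset.sum_congr rfl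
  intro j hj
  have hjl : j ≤ ℓ := Nat.lt_succ_iff.mp (Finset.mem_range.mp hj)
  obtain ⟨m, rfl⟩ : ∃ m, ℓ = j + m := ⟨ℓ - j, by omega⟩
  have hm1 : j + m - j = m := by omega
  have hm2 : j + m - (j + m - j) = j := by omega
  have hm3 : (j + m - j) + 1 = m + 1 := by omega
  have hm4 : ((j+m:ℕ) : ℤ) - ((j + m - j : ℕ) : ℤ) - 1 = (j : ℤ) - 1 := by
    rw [hm1]; push_cast; ring
  rw [hneg, hm2, hm3, hm4, hm1, scaledCoeff]
  rw [zpow_sub₀ (ne_of_gt hΔx), zpow_natCast, zpow_one]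
  have hfac : ((j+m).factorial : ℝ) = ((j+m).choose j : ℝ) * (j.factorial : ℝ) * (m.factorial : ℝ) := by
    exact_mod_cast (Nat.choose_mul_factorial_mul_factorial (Nat.le_add_right j m)).symm.trans
      (by rw [hm1])
  have hxne : Δx ≠ 0 := ne_of_gt hΔx
  have hjf : (j.factorial : ℝ) ≠ 0 := Nat.cast_ne_zero.mpr (Nat.factorial_ne_zero j)
  have hmf : (m.factorial : ℝ) ≠ 0 := Nat.cast_ne_zero.mpr (Nat.factorial_ne_zero m)
  have hsf : (s.factorial : ℝ) ≠ 0 := Nat.cast_ne_zero.mpr (Nat.factorial_ne_zero s)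
  have hs1 : ((s:ℝ) + 1) ≠ 0 := by positivity
  have hC : (((j+m).choose j : ℕ) : ℝ) ≠ 0 :=
    Nat.cast_ne_zero.mpr (Nat.choose_pos hjl).ne'
  have hcoef : Δx^(j+m) * Δt^(s+1) / (((j+m).factorial : ℝ) * ((s+1).factorial : ℝ))
        * (((j+m).choose j : ℕ) : ℝ)
      = (((m:ℝ)+1) * Δt * (Δx^j / Δx) / ((j.factorial : ℝ) * ((s:ℝ)+1)))
        * (Δx^(m+1) * Δt^s / (((m+1).factorial : ℝ) * (s.factorial : ℝ))) := by
    rw [hfac]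
    push_cast [Nat.factorial_succ, pow_add, pow_succ]
    field_simp
  simp only [Function.iterate_succ_apply] at *
  set U := iteratedDeriv j u x₀
  set A := Dt^[s] (Dx^[m] (Dx E)) (x₀, t₀)
  linear_combination (-(U * A)) * hcoef

/-- For smooth solutions of the variable-coefficient 1-D Maxwell system
`∂ₜ H = -u(x) ∂ₓ E`, `∂ₜ E = -e(x) ∂ₓ H`, the scaled Taylor coefficients at a point
satisfy the Hermite–Taylor recursion
`c^H_{ℓ,s} = -∑_{i=0}^ℓ ((i+1) Δt Δx^{ℓ-i-1} / ((ℓ-i)! s)) u^{(ℓ-i)}(x₀) c^E_{i+1,s-1}`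
and the analogous identity for `E`, for all `ℓ ≥ 0` and `s ≥ 1`. -/
theorem maxwell_1d_variable_coeff_scaled_coefficient_recursion
    (u e : ℝ → ℝ) (hu : ContDiff ℝ (⊤ : ℕ∞) u) (he : ContDiff ℝ (⊤ : ℕ∞) e)
    (H E : ℝ × ℝ → ℝ)
    (hH : ContDiff ℝ (⊤ : ℕ∞) H) (hE : ContDiff ℝ (⊤ : ℕ∞) E)
    (heq1 : ∀ p : ℝ × ℝ, Dt H p = -(u p.1) * Dx E p)
    (heq2 : ∀ p : ℝ × ℝ, Dt E p = -(e p.1) * Dx H p)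
    (x₀ t₀ Δx Δt : ℝ) (hΔx : 0 < Δx) (hΔt : 0 < Δt) :
    ∀ (ℓ s : ℕ),
      scaledCoeff H x₀ t₀ Δx Δt ℓ (s + 1) =
        -(∑ i ∈ Finset.range (ℓ + 1),
            ((i + 1 : ℝ) * Δt * Δx ^ ((ℓ : ℤ) - (i : ℤ) - 1) /
                ((Nat.factorial (ℓ - i) : ℝ) * (s + 1 : ℝ))) *
              iteratedDeriv (ℓ - i) u x₀ * scaledCoeff E x₀ t₀ Δx Δt (i + 1) s) ∧
      scaledCoeff E x₀ t₀ Δx Δt ℓ (s + 1) =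
        -(∑ i ∈ Finset.range (ℓ + 1),
            ((i + 1 : ℝ) * Δt * Δx ^ ((ℓ : ℤ) - (i : ℤ) - 1) /
                ((Nat.factorial (ℓ - i) : ℝ) * (s + 1 : ℝ))) *
              iteratedDeriv (ℓ - i) e x₀ * scaledCoeff H x₀ t₀ Δx Δt (i + 1) s) := by
  intro ℓ s
  exact ⟨key u hu H E hH hE heq1 x₀ t₀ Δx Δt hΔx ℓ s,
         key e he E H hE hH heq2 x₀ t₀ Δx Δt hΔx ℓ s⟩
end

section
/- Let μ, ε, Δx, Δt > 0, let L ≥ 0 and q ≥ 1 be integers, fix (x₀,t₀) ∈ ℝ², and let p^H(x,t) = ∑_{ℓ=0}^{L} ∑_{s=0}^{q} c^H_{ℓ,s} ((x−x₀)/Δx)^{ℓ} ((t−t₀)/Δt)^{s} and p^E(x,t) = ∑_{ℓ=0}^{L} ∑_{s=0}^{q} c^E_{ℓ,s} ((x−x₀)/Δx)^{ℓ} ((t−t₀)/Δt)^{s}, where the coefficients satisfy, for all 0 ≤ ℓ ≤ L and 1 ≤ s ≤ q, the recursion c^H_{ℓ,s} = −((ℓ+1) Δt / (μ s Δx)) c^E_{ℓ+1,s−1}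 and c^E_{ℓ,s} = −((ℓ+1) Δt / (ε s Δx)) c^H_{ℓ+1,s−1}, with the convention c^H_{L+1,s} = c^E_{L+1,s} = 0. Then there exist polynomials r_H, r_E ∈ ℝ[X] of degree at most L−1 such that μ ∂_t p^H(x,t) + ∂_x p^E(x,t) = ((t−t₀)/Δt)^{q} · r_H(x) and ε ∂_t p^E(x,t) + ∂_x p^H(x,t) = ((t−t₀)/Δt)^{q} · r_E(x) for all (x,t); that is, the residuals of the 1-D Maxwell equations for the Hermite–Taylor polynomials contain only monomials whose power of (t−t₀) equals exactly q. -/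
/-! Differentiating term by term, the recursion makes every monomial `X^ℓ T^s` with `s < q` of
`μ ∂ₜ p^H` cancel the matching monomial of `∂ₓ p^E`, where `X = (x - x₀)/Δx`, `T = (t - t₀)/Δt`;
the terms `ℓ = L` of `μ ∂ₜ p^H` vanish by the convention `c^E_{L+1,s} = 0`. What survives is the
part of `∂ₓ p^E` of time degree exactly `q`, whose spatial degree is below `L`. -/

/-- The Hermite–Taylor space-time polynomial with coefficients `c`, centered at
`(x₀, t₀)` and scaled by `Δx, Δt`, of spatial degree `L` and temporal degree `q`. -/
noncomputable def hermiteTaylorPoly (c : ℕ → ℕ → ℝ) (x₀ t₀ Δx Δt : ℝ) (L q : ℕ)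
    (x t : ℝ) : ℝ :=
  ∑ ℓ ∈ Finset.range (L + 1), ∑ s ∈ Finset.range (q + 1),
    c ℓ s * ((x - x₀) / Δx) ^ ℓ * ((t - t₀) / Δt) ^ s

section

open Finset Polynomial

lemma hasDerivAt_sum_mul_div_pow (a : ℕ → ℝ) (u₀ h : ℝ) (n : ℕ) (u : ℝ) :
    HasDerivAt (fun v => ∑ k ∈ range (n + 1), a k * ((v - u₀) / h) ^ k)
      (∑ k ∈ range n, (k + 1) * a (k + 1) * ((u - u₀) / h) ^ k / h) u := by
  have hterm : ∀ k ∈ range (n + 1), HasDerivAt (fun v => a k * ((v - u₀) / h) ^ k)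
      (a k * (k * ((u - u₀) / h) ^ (k - 1) * (1 / h))) u := fun k _ =>
    ((((hasDerivAt_id u).sub_const u₀).div_const h).pow k).const_mul (a k)
  refine (HasDerivAt.fun_sum hterm).congr_deriv ?_
  rw [sum_range_succ', CharP.cast_eq_zero]
  simp only [zero_mul, mul_zero, add_zero]
  exact sum_congr rfl fun k _ => by rw [add_tsub_cancel_right]; push_cast; ring

lemma hasDerivAt_hermiteTaylorPoly_time (c : ℕ → ℕ → ℝ) (x₀ t₀ Δx Δt : ℝ) (L q : ℕ) (x t : ℝ) :
    HasDerivAt (fun t' => hermiteTaylorPoly c x₀ t₀ Δx Δt L q x t')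
      (∑ ℓ ∈ range (L + 1), ∑ s ∈ range q,
        (s + 1) * (c ℓ (s + 1) * ((x - x₀) / Δx) ^ ℓ) * ((t - t₀) / Δt) ^ s / Δt) t :=
  HasDerivAt.fun_sum fun ℓ _ =>
    hasDerivAt_sum_mul_div_pow (fun s => c ℓ s * ((x - x₀) / Δx) ^ ℓ) t₀ Δt q t

lemma hasDerivAt_hermiteTaylorPoly_space (c : ℕ → ℕ → ℝ) (x₀ t₀ Δx Δt : ℝ) (L q : ℕ) (x t : ℝ) :
    HasDerivAt (fun x' => hermiteTaylorPoly c x₀ t₀ Δx Δt L q x' t)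
      (∑ s ∈ range (q + 1), ∑ ℓ ∈ range L,
        (ℓ + 1) * (c (ℓ + 1) s * ((t - t₀) / Δt) ^ s) * ((x - x₀) / Δx) ^ ℓ / Δx) x := by
  have hswap : (fun x' => hermiteTaylorPoly c x₀ t₀ Δx Δt L q x' t) = fun x' =>
      ∑ s ∈ range (q + 1), ∑ ℓ ∈ range (L + 1),
        c ℓ s * ((t - t₀) / Δt) ^ s * ((x' - x₀) / Δx) ^ ℓ := by
    ext x'
    rw [hermiteTaylorPoly, sum_comm]
    exact sum_congr rfl fun s _ => sum_congr rfl fun ℓ _ => by ring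
  rw [hswap]
  exact HasDerivAt.fun_sum fun s _ =>
    hasDerivAt_sum_mul_div_pow (fun ℓ => c ℓ s * ((t - t₀) / Δt) ^ s) x₀ Δx L x

lemma degree_sum_C_mul_pow_lt {R : Type*} [Semiring R] {P : R[X]} (hP : P.degree ≤ 1)
    (a : ℕ → R) (n : ℕ) : (∑ k ∈ range n, C (a k) * P ^ k).degree < n := by
  refine (degree_sum_le _ _).trans_lt <|
    (Finset.sup_lt_iff (WithBot.bot_lt_coe n)).2 fun k hk => ?_
  calc (C (a k) * P ^ k).degree ≤ (C (a k)).degree + (P ^ k).degree := degree_mul_le _ _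
    _ ≤ 0 + k * 1 := add_le_add degree_C_le (degree_pow_le_of_le k hP)
    _ < n := by simpa using mem_range.1 hk

lemma maxwell_residual_eq {a Δx Δt : ℝ} (ha : a ≠ 0) (hΔt : Δt ≠ 0) {L q : ℕ}
    {cH cE : ℕ → ℕ → ℝ} (hconv : ∀ s : ℕ, cE (L + 1) s = 0)
    (hrec : ∀ ℓ s : ℕ, ℓ ≤ L → s + 1 ≤ q →
      cH ℓ (s + 1) = -((ℓ + 1 : ℝ) * Δt / (a * (s + 1 : ℝ) * Δx)) * cE (ℓ + 1) s)
    (X T : ℝ) :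
    a * ∑ ℓ ∈ range (L + 1), ∑ s ∈ range q, (s + 1) * (cH ℓ (s + 1) * X ^ ℓ) * T ^ s / Δt
      + ∑ s ∈ range (q + 1), ∑ ℓ ∈ range L, (ℓ + 1) * (cE (ℓ + 1) s * T ^ s) * X ^ ℓ / Δx
      = T ^ q * ∑ ℓ ∈ range L, (ℓ + 1) * cE (ℓ + 1) q / Δx * X ^ ℓ := by
  have hterm : ∀ ℓ ≤ L, ∀ s < q, a * ((s + 1) * (cH ℓ (s + 1) * X ^ ℓ) * T ^ s / Δt)
      = -((ℓ + 1) * (cE (ℓ + 1) s * T ^ s) * X ^ ℓ / Δx) := fun ℓ hℓ s hs => by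
    rw [hrec ℓ s hℓ hs]
    field_simp
  have htime : a * ∑ ℓ ∈ range (L + 1), ∑ s ∈ range q,
        (s + 1) * (cH ℓ (s + 1) * X ^ ℓ) * T ^ s / Δt
      = -∑ s ∈ range q, ∑ ℓ ∈ range L, (ℓ + 1) * (cE (ℓ + 1) s * T ^ s) * X ^ ℓ / Δx := by
    calc _ = ∑ ℓ ∈ range (L + 1), ∑ s ∈ range q,
          -((ℓ + 1) * (cE (ℓ + 1) s * T ^ s) * X ^ ℓ / Δx) := by
          simp only [mul_sum]
          exact sum_congr rfl fun ℓ hℓ => sum_congr rfl fun s hs =>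
            hterm ℓ (Nat.lt_succ_iff.1 (mem_range.1 hℓ)) s (mem_range.1 hs)
      _ = _ := by
          rw [sum_range_succ, sum_comm]
          simp [hconv]
  rw [htime, sum_range_succ, mul_sum, neg_add_cancel_left]
  exact sum_congr rfl fun ℓ _ => by ring

lemma exists_maxwell_residual_eq_pow_mul_eval {a Δx Δt : ℝ} (ha : a ≠ 0) (hΔt : Δt ≠ 0)
    {L q : ℕ} (x₀ t₀ : ℝ) {cH cE : ℕ → ℕ → ℝ} (hconv : ∀ s : ℕ, cE (L + 1) s = 0)
    (hrec : ∀ ℓ s : ℕ, ℓ ≤ L → s + 1 ≤ q →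
      cH ℓ (s + 1) = -((ℓ + 1 : ℝ) * Δt / (a * (s + 1 : ℝ) * Δx)) * cE (ℓ + 1) s) :
    ∃ r : ℝ[X], r.degree < L ∧ ∀ x t : ℝ,
      a * deriv (fun t' => hermiteTaylorPoly cH x₀ t₀ Δx Δt L q x t') t
        + deriv (fun x' => hermiteTaylorPoly cE x₀ t₀ Δx Δt L q x' t) x
        = ((t - t₀) / Δt) ^ q * r.eval x := by
  refine ⟨∑ ℓ ∈ range L, C ((ℓ + 1) * cE (ℓ + 1) q / Δx) * (C Δx⁻¹ * X + C (-(x₀ / Δx))) ^ ℓ,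
    degree_sum_C_mul_pow_lt degree_linear_le _ L, fun x t => ?_⟩
  rw [(hasDerivAt_hermiteTaylorPoly_time cH x₀ t₀ Δx Δt L q x t).deriv,
    (hasDerivAt_hermiteTaylorPoly_space cE x₀ t₀ Δx Δt L q x t).deriv,
    maxwell_residual_eq ha hΔt hconv hrec]
  simp only [eval_finsetSum, eval_mul, eval_C, eval_pow, eval_add, eval_X]
  congr 1
  exact sum_congr rfl fun ℓ _ => by ring

end

theorem hermite_taylor_residual_structure_general
    (μ ε Δx Δt : ℝ) (hμ : 0 < μ) (hε : 0 < ε) (hΔt : 0 < Δt)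
    (L q : ℕ) (x₀ t₀ : ℝ) (cH cE : ℕ → ℕ → ℝ)
    (hconv : ∀ s : ℕ, cH (L + 1) s = 0 ∧ cE (L + 1) s = 0)
    (hrecH : ∀ ℓ s : ℕ, ℓ ≤ L → s + 1 ≤ q →
      cH ℓ (s + 1) = -((ℓ + 1 : ℝ) * Δt / (μ * (s + 1 : ℝ) * Δx)) * cE (ℓ + 1) s)
    (hrecE : ∀ ℓ s : ℕ, ℓ ≤ L → s + 1 ≤ q →
      cE ℓ (s + 1) = -((ℓ + 1 : ℝ) * Δt / (ε * (s + 1 : ℝ) * Δx)) * cH (ℓ + 1) s) :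
    ∃ (rH rE : Polynomial ℝ), rH.degree < (L : ℕ) ∧ rE.degree < (L : ℕ) ∧
      (∀ x t : ℝ,
        μ * deriv (fun t' => hermiteTaylorPoly cH x₀ t₀ Δx Δt L q x t') t
          + deriv (fun x' => hermiteTaylorPoly cE x₀ t₀ Δx Δt L q x' t) x
          = ((t - t₀) / Δt) ^ q * rH.eval x) ∧
      (∀ x t : ℝ,
        ε * deriv (fun t' => hermiteTaylorPoly cE x₀ t₀ Δx Δt L q x t') t
          + deriv (fun x' => hermiteTaylorPoly cH x₀ t₀ Δx Δt L q x' t) x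
          = ((t - t₀) / Δt) ^ q * rE.eval x) := by
  obtain ⟨rH, hrH_deg, hrH⟩ := exists_maxwell_residual_eq_pow_mul_eval hμ.ne' hΔt.ne' x₀ t₀
    (fun s => (hconv s).2) hrecH
  obtain ⟨rE, hrE_deg, hrE⟩ := exists_maxwell_residual_eq_pow_mul_eval hε.ne' hΔt.ne' x₀ t₀
    (fun s => (hconv s).1) hrecE
  exact ⟨rH, rE, hrH_deg, hrE_deg, hrH, hrE⟩

/-- If the coefficients of the Hermite–Taylor polynomials `p^H, p^E` satisfy the
constant-coefficient 1-D Maxwell recursion (with the convention that coefficients of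
spatial index `L+1` vanish), then the residuals of the 1-D Maxwell equations are of
the form `((t-t₀)/Δt)^q · r(x)` for polynomials `r_H, r_E` of degree at most `L-1`. -/
theorem hermite_taylor_residual_structure
    (μ ε Δx Δt : ℝ) (hμ : 0 < μ) (hε : 0 < ε) (hΔx : 0 < Δx) (hΔt : 0 < Δt)
    (L q : ℕ) (hq : 1 ≤ q) (x₀ t₀ : ℝ) (cH cE : ℕ → ℕ → ℝ)
    (hconv : ∀ s : ℕ, cH (L + 1) s = 0 ∧ cE (L + 1) s = 0)
    (hrecH : ∀ ℓ s : ℕ, ℓ ≤ L → s + 1 ≤ q →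
      cH ℓ (s + 1) = -((ℓ + 1 : ℝ) * Δt / (μ * (s + 1 : ℝ) * Δx)) * cE (ℓ + 1) s)
    (hrecE : ∀ ℓ s : ℕ, ℓ ≤ L → s + 1 ≤ q →
      cE ℓ (s + 1) = -((ℓ + 1 : ℝ) * Δt / (ε * (s + 1 : ℝ) * Δx)) * cH (ℓ + 1) s) :
    ∃ (rH rE : Polynomial ℝ), rH.degree < (L : ℕ) ∧ rE.degree < (L : ℕ) ∧
      (∀ x t : ℝ,
        μ * deriv (fun t' => hermiteTaylorPoly cH x₀ t₀ Δx Δt L q x t') t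
          + deriv (fun x' => hermiteTaylorPoly cE x₀ t₀ Δx Δt L q x' t) x
          = ((t - t₀) / Δt) ^ q * rH.eval x) ∧
      (∀ x t : ℝ,
        ε * deriv (fun t' => hermiteTaylorPoly cE x₀ t₀ Δx Δt L q x t') t
          + deriv (fun x' => hermiteTaylorPoly cH x₀ t₀ Δx Δt L q x' t) x
          = ((t - t₀) / Δt) ^ q * rE.eval x) :=
  hermite_taylor_residual_structure_general μ ε Δx Δt hμ hε hΔt L q x₀ t₀ cH cE hconv hrecH hrecE
end
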